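/- arXiv:1912.13473 — 4 statements merged into one kernel-verified Lean document; each statement's English description precedes it below -/
import Mathlib

section
/- Let k be a field, K a group, K' a normal subgroup of K, and (ρ, V) a simple k-linear representation of K (i.e. V is a simple k[K]-module) such that the subgroup K'·ker(ρ) has finite index in K, where ker(ρ) = {g ∈ K : ρ(g) = id_V}. Then V, viewed as a k[K']-module, is semisimple. -/
/-!
Clifford's argument. Since `H` is normal, `q ↦ ρ g (q)` maps `k[H]`-submodules of `ρ|_H` to
`k[H]`-submodules, so `G` acts on their lattice by order automorphisms; the finite-index
subgroup `H ⊔ ker ρ` acts trivially, so every orbit is finite. A submodule fixed by all of `G`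
is a subrepresentation of `ρ`, hence `⊥` or `⊤`. So the orbit of a nonzero cyclic submodule sums
to `⊤`, making `ρ|_H` finitely generated; it then has a maximal submodule `U`, the orbit of `U`
intersects to `⊥`, and `ρ|_H` embeds into the finite product of the simple modules
`ρ|_H ⧸ ρ g (U)`.
-/

open MonoidAlgebra

theorem IsCompactElement.map_orderIso {α β : Type*} [PartialOrder α] [PartialOrder β]
    (f : α ≃o β) {a : α} (ha : IsCompactElement a) : IsCompactElement (f a) := by
  intro s u hne hdir hlub hle
  have hdir' : DirectedOn (· ≤ ·) (f ⁻¹' s) := fun x hx y hy => by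
    obtain ⟨z, hz, hxz, hyz⟩ := hdir _ hx _ hy
    exact ⟨f.symm z, by simpa, f.le_symm_apply.mpr hxz, f.le_symm_apply.mpr hyz⟩
  obtain ⟨x, hx, hax⟩ := ha (f ⁻¹' s) (f.symm u) (hne.preimage f.surjective) hdir'
    (by simpa using hlub) (f.le_symm_apply.mpr hle)
  exact ⟨f x, hx, f.monotone hax⟩

theorem Set.Finite.isCompactElement_sSup {α : Type*} [CompleteLattice α] {s : Set α}
    (hs : s.Finite) (h : ∀ a ∈ s, IsCompactElement a) : IsCompactElement (sSup s) := by
  rw [← hs.coe_toFinset, ← Finset.sup_id_eq_sSup]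
  exact CompleteLattice.isCompactElement_finsetSup _ fun a ha => h a (hs.mem_toFinset.mp ha)

theorem IsSemisimpleModule.of_sInf_coatoms_eq_bot {R M : Type*} [Ring R] [AddCommGroup M]
    [Module R M] {s : Set (Submodule R M)} (hs : s.Finite) (hc : ∀ p ∈ s, IsCoatom p)
    (h : sInf s = ⊥) : IsSemisimpleModule R M := by
  have := hs.to_subtype
  have : ∀ p : s, IsSimpleModule R (M ⧸ (p : Submodule R M)) :=
    fun p => isSimpleModule_iff_isCoatom.mpr (hc p p.2)
  refine .of_injective (LinearMap.pi fun p : s => (p : Submodule R M).mkQ) ?_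
  rw [← LinearMap.ker_eq_bot, LinearMap.ker_pi]
  simpa [sInf_eq_iInf'] using h

namespace MonoidHom

variable {G L : Type*} [Group G] [CompleteLattice L] (φ : G →* L ≃o L)

theorem apply_iSup_apply (g : G) (a : L) : φ g (⨆ h, φ h a) = ⨆ h, φ h a := by
  rw [OrderIso.map_iSup]
  simp_rw [← RelIso.mul_apply, ← map_mul]
  exact (Equiv.mulLeft g).iSup_comp (g := fun h => φ h a)

theorem apply_iInf_apply (g : G) (a : L) : φ g (⨅ h, φ h a) = ⨅ h, φ h a := by
  rw [OrderIso.map_iInf]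
  simp_rw [← RelIso.mul_apply, ← map_mul]
  exact (Equiv.mulLeft g).iInf_comp (g := fun h => φ h a)

theorem finite_range_apply [φ.ker.FiniteIndex] (a : L) : (Set.range fun g => φ g a).Finite := by
  have : Finite φ.range :=
    (QuotientGroup.quotientKerEquivRange φ).toEquiv.finite_iff.mp inferInstance
  rw [← Function.comp_def (fun f : L ≃o L => f a) φ, Set.range_comp, ← coe_range]
  exact (Set.toFinite _).image _

theorem exists_finite_coatoms_sInf_eq_bot [φ.ker.FiniteIndex]
    (hfix : ∀ a : L, (∀ g, φ g a = a) → a = ⊥ ∨ a = ⊤) {a : L} (ha : IsCompactElement a)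
    (ha₀ : a ≠ ⊥) : ∃ s : Set L, s.Finite ∧ (∀ b ∈ s, IsCoatom b) ∧ sInf s = ⊥ := by
  have : Nontrivial L := ⟨a, ⊥, ha₀⟩
  have hsup : ⨆ g, φ g a = ⊤ := (hfix _ (φ.apply_iSup_apply · a)).resolve_left
    (ne_bot_of_le_ne_bot ha₀ (le_iSup_of_le 1 (by simp)))
  have htop : IsCompactElement (⊤ : L) := hsup ▸ (φ.finite_range_apply a).isCompactElement_sSup
    (Set.forall_mem_range.2 fun g => ha.map_orderIso (φ g))
  have := CompleteLattice.coatomic_of_top_compact htop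
  obtain ⟨U, hU⟩ := IsCoatomic.exists_coatom L
  refine ⟨_, φ.finite_range_apply U,
    Set.forall_mem_range.2 fun g => ((φ g).isCoatom_iff U).2 hU, ?_⟩
  exact (hfix _ (φ.apply_iInf_apply · U)).resolve_right
    (ne_top_of_le_ne_top hU.1 (iInf_le_of_le 1 (by simp)))

end MonoidHom

namespace Representation

variable {k G V : Type*} [CommRing k] [Group G] [AddCommGroup V] [Module k V]
  (ρ : Representation k G V) (H : Subgroup G)

local notation "ρ↾H" => asModule (ρ.comp H.subtype)

/-- `ρ` transported to the type synonym carrying the `k[H]`-module structure of `ρ|_H`. -/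
noncomputable def onRes : Representation k G ρ↾H :=
  (asModuleEquiv (ρ.comp H.subtype)).symm.conjRingEquiv.toMonoidHom.comp ρ

lemma onRes_apply_coe (h : H) (v : ρ↾H) : ρ.onRes H h v = of k H h • v :=
  asModuleEquiv_symm_map_rho (ρ.comp H.subtype) h _

variable {H}

lemma onRes_mem_iff {h : G} (hh : h ∈ H) {q : Submodule k[H] ρ↾H} {v : ρ↾H} :
    ρ.onRes H h v ∈ q ↔ v ∈ q := by
  refine ⟨fun hv => ?_, fun hv => ρ.onRes_apply_coe H ⟨h, hh⟩ v ▸ q.smul_mem _ hv⟩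
  have := ρ.onRes_apply_coe H ⟨h⁻¹, inv_mem hh⟩ _ ▸ q.smul_mem (of k H ⟨h⁻¹, inv_mem hh⟩) hv
  rwa [← Module.End.mul_apply, ← map_mul, inv_mul_cancel, map_one, Module.End.one_apply] at this

variable [H.Normal]

lemma onRes_smul_of (g : G) (h : H) (v : ρ↾H) :
    ρ.onRes H g (of k H h • v) = of k H (MulAut.conjNormal g h) • ρ.onRes H g v := by
  rw [← onRes_apply_coe, ← onRes_apply_coe, ← Module.End.mul_apply, ← Module.End.mul_apply,
    ← map_mul, ← map_mul, MulAut.conjNormal_apply, inv_mul_cancel_right]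

noncomputable def conjSubmodule (g : G) (q : Submodule k[H] ρ↾H) : Submodule k[H] ρ↾H :=
  submoduleOfSMulMem ((q.restrictScalars k).comap (ρ.onRes H g⁻¹)) fun h v hv => by
    rw [Submodule.mem_comap, onRes_smul_of]
    exact q.smul_mem _ hv

lemma mem_conjSubmodule {g : G} {q : Submodule k[H] ρ↾H} {v : ρ↾H} :
    v ∈ ρ.conjSubmodule g q ↔ ρ.onRes H g⁻¹ v ∈ q := Iff.rfl

lemma conjSubmodule_mul (g g' : G) (q : Submodule k[H] ρ↾H) :
    ρ.conjSubmodule (g * g') q = ρ.conjSubmodule g (ρ.conjSubmodule g' q) := by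
  ext v
  simp only [mem_conjSubmodule, mul_inv_rev, map_mul, Module.End.mul_apply]

lemma conjSubmodule_one (q : Submodule k[H] ρ↾H) : ρ.conjSubmodule 1 q = q := by
  ext v
  simp only [mem_conjSubmodule, inv_one, map_one, Module.End.one_apply]

lemma conjSubmodule_mono (g : G) : Monotone (ρ.conjSubmodule (H := H) g) :=
  fun _ _ h _ hv => h hv

noncomputable def conjSubmoduleHom : G →* (Submodule k[H] ρ↾H ≃o Submodule k[H] ρ↾H) where
  toFun g :=
    { toFun := ρ.conjSubmodule g
      invFun := ρ.conjSubmodule g⁻¹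
      left_inv q := by rw [← conjSubmodule_mul, inv_mul_cancel, conjSubmodule_one]
      right_inv q := by rw [← conjSubmodule_mul, mul_inv_cancel, conjSubmodule_one]
      map_rel_iff' := ⟨fun h => by
          simpa [← conjSubmodule_mul, conjSubmodule_one] using ρ.conjSubmodule_mono g⁻¹ h,
        (ρ.conjSubmodule_mono g ·)⟩ }
  map_one' := RelIso.ext ρ.conjSubmodule_one
  map_mul' g g' := RelIso.ext (ρ.conjSubmodule_mul g g')

lemma mem_conjSubmoduleHom {g : G} {q : Submodule k[H] ρ↾H} {v : ρ↾H} :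
    v ∈ ρ.conjSubmoduleHom g q ↔ ρ.onRes H g⁻¹ v ∈ q := Iff.rfl

lemma sup_ker_le_ker_conjSubmoduleHom : H ⊔ ρ.ker ≤ (ρ.conjSubmoduleHom (H := H)).ker := by
  refine sup_le (fun h hh => ?_) (fun g hg => ?_) <;>
    refine MonoidHom.mem_ker.mpr (RelIso.ext fun q => Submodule.ext fun v => ?_)
  · exact ρ.onRes_mem_iff (inv_mem hh)
  · have : ρ.onRes H g⁻¹ = 1 := by
      rw [onRes, MonoidHom.comp_apply, MonoidHom.mem_ker.mp (inv_mem hg), map_one]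
    rw [mem_conjSubmoduleHom, this, Module.End.one_apply]
    rfl

theorem eq_bot_or_eq_top_of_forall_conjSubmoduleHom_eq [IsSimpleModule k[G] ρ.asModule]
    {q : Submodule k[H] ρ↾H} (hq : ∀ g, ρ.conjSubmoduleHom g q = q) : q = ⊥ ∨ q = ⊤ := by
  let e : ρ↾H ≃ₗ[k] ρ.asModule := (asModuleEquiv _).trans ρ.asModuleEquiv.symm
  have he (g : G) (v : ρ.asModule) : e.symm (of k G g • v) = ρ.onRes H g (e.symm v) := by
    rw [← ρ.asModuleEquiv.symm_apply_apply v, ← asModuleEquiv_symm_map_rho]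
    rfl
  let P : Submodule k[G] ρ.asModule :=
    submoduleOfSMulMem ((q.restrictScalars k).comap e.symm.toLinearMap) fun g v hv => by
      rw [← hq g⁻¹, Submodule.mem_comap, Submodule.restrictScalars_mem,
        mem_conjSubmoduleHom, inv_inv] at hv
      rwa [Submodule.mem_comap, LinearEquiv.coe_coe, he]
  have hP : P.restrictScalars k = (q.restrictScalars k).comap e.symm.toLinearMap := rfl
  rcases eq_bot_or_eq_top P with h | h
  · left
    simpa [h, Submodule.comap_equiv_eq_map_symm, eq_comm (a := ⊥)] using hP
  · right
    simpa [h, Submodule.comap_equiv_eq_map_symm, eq_comm (a := ⊤)] using hP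

end Representation

theorem restriction_semisimple_of_finite_index_ker
    (k : Type) [Field k] (K : Type) [Group K] (K' : Subgroup K) [K'.Normal]
    (V : Type) [AddCommGroup V] [Module k V]
    (ρ : Representation k K V)
    (hsimple : IsSimpleModule (MonoidAlgebra k K) ρ.asModule)
    (hindex : (K' ⊔ MonoidHom.ker ρ).FiniteIndex) :
    IsSemisimpleModule (MonoidAlgebra k K') (Representation.asModule (ρ.comp K'.subtype)) := by
  have : (ρ.conjSubmoduleHom (H := K')).ker.FiniteIndex :=
    Subgroup.finiteIndex_of_le ρ.sup_ker_le_ker_conjSubmoduleHom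
  have : Nontrivial ρ.asModule := IsSimpleModule.nontrivial k[K] ρ.asModule
  obtain ⟨v, hv⟩ := exists_ne (0 : ρ.asModule)
  let w := (Representation.asModuleEquiv (ρ.comp K'.subtype)).symm (ρ.asModuleEquiv v)
  obtain ⟨s, hs, hc, hbot⟩ := (ρ.conjSubmoduleHom (H := K')).exists_finite_coatoms_sInf_eq_bot
    (fun _ => ρ.eq_bot_or_eq_top_of_forall_conjSubmoduleHom_eq)
    (Submodule.singleton_span_isCompactElement w) (by simpa [w] using hv)
  exact .of_sInf_coatoms_eq_bot hs hc hbot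
end

section
/- Let k be an algebraically closed field, K a group, and H a normal subgroup of K such that the quotient K/H is finite and commutative. Let (ρ, V) and (ρ̄, W) be finite-dimensional simple k-linear representations of K such that there exists a nonzero k-linear map V → W that is equivariant for the restricted actions of H. Then there exists a group homomorphism χ : K → k^× trivial on H such that ρ ≅ ρ̄ ⊗ χ, where ρ̄ ⊗ χ denotes the representation g ↦ χ(g)·ρ̄(g) on W. -/
/-!
The conjugation action `g • f = ρ' g ∘ f ∘ ρ g⁻¹` of `K` on `Hom_k(V, W)` preserves the subspace
of `H`-equivariant maps, which is nonzero by hypothesis, and acts on it through the commutative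
group `K ⧸ H`. Commuting operators on a nonzero finite-dimensional space over an algebraically
closed field have a common eigenvector `f`, so `g • f = χ g • f` for a character `χ` trivial on
`H`; this says exactly that `f` intertwines `ρ` with the twist of `ρ'` by `χ⁻¹`. Twisting by a
character preserves irreducibility, so `f` is an isomorphism by Schur's lemma.
-/

namespace Module.End

variable {K M ι : Type*} [Field K] [AddCommGroup M] [Module K M]

theorem exists_common_eigenvector [IsAlgClosed K] [FiniteDimensional K M] [Nontrivial M]
    (T : ι → End K M) (hT : ∀ i j, Commute (T i) (T j)) :
    ∃ x : M, x ≠ 0 ∧ ∀ i, ∃ μ : K, T i x = μ • x := by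
  let stable : Set (Submodule K M) := {p | p ≠ ⊥ ∧ ∀ i, p ≤ p.comap (T i)}
  obtain ⟨p, ⟨hp, hpT⟩, hmin⟩ :=
    wellFounded_lt.has_min stable ⟨⊤, top_ne_bot, fun _ _ _ ↦ trivial⟩
  -- An eigenspace of `T i` inside the minimal `p` is again stable, hence all of `p`.
  have hscalar : ∀ i, ∃ μ : K, ∀ x ∈ p, T i x = μ • x := by
    intro i
    have : Nontrivial p := Submodule.nontrivial_iff_ne_bot.mpr hp
    obtain ⟨μ, hμ⟩ := exists_eigenvalue ((T i).restrict (hpT i))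
    obtain ⟨v, hv⟩ := hμ.exists_hasEigenvector
    let E := p ⊓ (T i).eigenspace μ
    have hE : E ∈ stable := by
      refine ⟨(Submodule.ne_bot_iff _).mpr ⟨v, ⟨v.2, ?_⟩, fun h ↦ hv.2 (Subtype.ext h)⟩,
        fun j ↦ ?_⟩
      · exact mem_eigenspace_iff.mpr congr(Subtype.val $(hv.apply_eq_smul))
      · exact fun x hx ↦ ⟨hpT j hx.1, mapsTo_genEigenspace_of_comm (hT i j) μ 1 hx.2⟩
    have hEp : E = p := by_contra fun hne ↦ hmin E hE (lt_of_le_of_ne inf_le_left hne)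
    exact ⟨μ, fun x hx ↦ mem_eigenspace_iff.mp (hEp ▸ hx : x ∈ E).2⟩
  choose μ hμ using hscalar
  obtain ⟨x, hx, hx0⟩ := Submodule.exists_mem_ne_zero_of_ne_bot hp
  exact ⟨x, hx0, fun i ↦ ⟨μ i, hμ i x hx⟩⟩

end Module.End

namespace Representation

open scoped IsMulCommutative

variable {k G V W : Type*} [Field k] [AddCommGroup V] [Module k V] [AddCommGroup W] [Module k W]

theorem exists_monoidHom_of_common_eigenvector [Monoid G] (ρ : Representation k G V) {v : V}
    (hv : v ≠ 0) (hρv : ∀ g, ∃ μ : k, ρ g v = μ • v) :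
    ∃ χ : G →* k, ∀ g, ρ g v = χ g • v := by
  choose μ hμ using hρv
  have hinj : Function.Injective (· • v : k → V) := smul_left_injective k hv
  refine ⟨{ toFun := μ, map_one' := hinj ?_, map_mul' := fun a b ↦ hinj ?_ }, hμ⟩
  · simp only [← hμ, map_one, Module.End.one_apply, one_smul]
  · show μ (a * b) • v = (μ a * μ b) • v
    rw [← hμ, map_mul, Module.End.mul_apply, hμ, map_smul, hμ, smul_smul, mul_comm]

theorem exists_character_eigenvector [Group G] [IsMulCommutative G] [IsAlgClosed k]
    [FiniteDimensional k V] [Nontrivial V] (ρ : Representation k G V) :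
    ∃ χ : G →* kˣ, ∃ v : V, v ≠ 0 ∧ ∀ g, ρ g v = (χ g : k) • v := by
  obtain ⟨v, hv, hρv⟩ := Module.End.exists_common_eigenvector ρ fun a b ↦ by
    rw [Commute, SemiconjBy, ← map_mul, ← map_mul, mul_comm]
  obtain ⟨χ, hχ⟩ := ρ.exists_monoidHom_of_common_eigenvector hv hρv
  exact ⟨χ.toHomUnits, v, hv, hχ⟩

section Twist

variable [Monoid G]

def twist (ρ : Representation k G V) (χ : G →* kˣ) : Representation k G V where
  toFun g := (χ g : k) • ρ g
  map_one' := by simp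
  map_mul' a b := by
    ext v
    simp only [map_mul, Units.val_mul, LinearMap.smul_apply, Module.End.mul_apply, map_smul,
      mul_smul]
    exact smul_comm _ _ _

@[simp]
theorem twist_apply (ρ : Representation k G V) (χ : G →* kˣ) (g : G) (v : V) :
    ρ.twist χ g v = (χ g : k) • ρ g v := rfl

def subrepresentationTwistOrderIso (ρ : Representation k G V) (χ : G →* kˣ) :
    Subrepresentation (ρ.twist χ) ≃o Subrepresentation ρ where
  toFun p := ⟨p.toSubmodule, fun g v hv ↦ by
    simpa [Units.smul_def] using
      p.toSubmodule.smul_mem ((χ g)⁻¹ : kˣ) (p.apply_mem_toSubmodule g hv)⟩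
  invFun p := ⟨p.toSubmodule, fun g v hv ↦
    p.toSubmodule.smul_mem _ (p.apply_mem_toSubmodule g hv)⟩
  left_inv _ := rfl
  right_inv _ := rfl
  map_rel_iff' := Iff.rfl

instance (ρ : Representation k G V) (χ : G →* kˣ) [IsIrreducible ρ] :
    IsIrreducible (ρ.twist χ) :=
  (subrepresentationTwistOrderIso ρ χ).isSimpleOrder_iff.mpr ‹_›

end Twist

theorem exists_character_eigenvector_of_invariants_ne_bot [Group G] (S : Subgroup G)
    [S.Normal] [IsMulCommutative (G ⧸ S)] [IsAlgClosed k] [FiniteDimensional k V]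
    (ρ : Representation k G V) (hS : invariants (ρ.comp S.subtype) ≠ ⊥) :
    ∃ χ : G →* kˣ, (∀ s ∈ S, χ s = 1) ∧ ∃ v : V, v ≠ 0 ∧ ∀ g, ρ g v = (χ g : k) • v := by
  have := Submodule.nontrivial_iff_ne_bot.mpr hS
  obtain ⟨χ, v, hv, hχ⟩ := exists_character_eigenvector (quotientToInvariants ρ S)
  refine ⟨χ.comp (QuotientGroup.mk' S), fun s hs ↦ ?_, v, fun h ↦ hv (Subtype.ext h),
    fun g ↦ congr(Subtype.val $(hχ g))⟩
  simp [(QuotientGroup.eq_one_iff s).mpr hs]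

section Hom

variable [Group G] {ρ : Representation k G V} {σ : Representation k G W} {χ : G →* kˣ}
  {f : V →ₗ[k] W}

theorem isIntertwiningMap_twist_inv_of_linHom_eq_smul
    (hf : ∀ g, linHom ρ σ g f = (χ g : k) • f) : IsIntertwiningMap ρ (σ.twist χ⁻¹) f := by
  refine ⟨fun g v ↦ ?_⟩
  have hσ : σ g (f v) = (χ g : k) • f (ρ g v) := by simpa using congr($(hf g) (ρ g v))
  rw [twist_apply, hσ, MonoidHom.inv_apply, ← Units.smul_def, ← Units.smul_def,
    inv_smul_smul]

theorem bijective_of_linHom_eq_smul [IsIrreducible ρ] [IsIrreducible σ] (hf₀ : f ≠ 0)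
    (hf : ∀ g, linHom ρ σ g f = (χ g : k) • f) : Function.Bijective f :=
  (IsIrreducible.bijective_or_eq_zero (f.intertwiningMap_of_isIntertwiningMap ρ (σ.twist χ⁻¹)
    (isIntertwiningMap_twist_inv_of_linHom_eq_smul hf).isIntertwining)).resolve_right
    fun h ↦ hf₀ congr(IntertwiningMap.toLinearMap $h)

end Hom

end Representation

theorem twist_by_character_of_common_restriction_general
    (k : Type) [Field k] [IsAlgClosed k]
    (K : Type) [Group K] (H : Subgroup K) [H.Normal]
    (hcomm : ∀ a b : K ⧸ H, a * b = b * a)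
    (V W : Type) [AddCommGroup V] [Module k V] [FiniteDimensional k V]
    [AddCommGroup W] [Module k W] [FiniteDimensional k W]
    (ρ : Representation k K V) (ρ' : Representation k K W)
    (hV : IsSimpleModule (MonoidAlgebra k K) ρ.asModule)
    (hW : IsSimpleModule (MonoidAlgebra k K) ρ'.asModule)
    (hf : ∃ f : V →ₗ[k] W, f ≠ 0 ∧ ∀ h ∈ H, ∀ v : V, f (ρ h v) = ρ' h (f v)) :
    ∃ χ : K →* kˣ, (∀ h ∈ H, χ h = 1) ∧
      ∃ e : V ≃ₗ[k] W, ∀ (g : K) (v : V), e (ρ g v) = (χ g : k) • ρ' g (e v) := by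
  obtain ⟨f₀, hf₀, hf₀H⟩ := hf
  have : IsMulCommutative (K ⧸ H) := ⟨⟨hcomm⟩⟩
  have : ρ.IsIrreducible := (ρ.irreducible_iff_isSimpleModule_asModule).mpr hV
  have : ρ'.IsIrreducible := (ρ'.irreducible_iff_isSimpleModule_asModule).mpr hW
  have hf₀mem : f₀ ∈ Representation.invariants ((ρ.linHom ρ').comp H.subtype) :=
    (Representation.mem_linHom_invariants_iff_isIntertwining (ρ := ρ.comp H.subtype)
      (σ := ρ'.comp H.subtype) f₀).mpr ⟨fun h ↦ hf₀H h h.2⟩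
  obtain ⟨χ, hχH, f, hf, hχ⟩ :=
    Representation.exists_character_eigenvector_of_invariants_ne_bot H (ρ.linHom ρ')
      ((Submodule.ne_bot_iff _).mpr ⟨f₀, hf₀mem, hf₀⟩)
  refine ⟨χ⁻¹, fun h hh ↦ by simp [hχH h hh],
    LinearEquiv.ofBijective f (Representation.bijective_of_linHom_eq_smul hf hχ), ?_⟩
  exact (Representation.isIntertwiningMap_twist_inv_of_linHom_eq_smul hχ).isIntertwining

theorem twist_by_character_of_common_restriction
    (k : Type) [Field k] [IsAlgClosed k]
    (K : Type) [Group K] (H : Subgroup K) [H.Normal]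
    [Finite (K ⧸ H)] (hcomm : ∀ a b : K ⧸ H, a * b = b * a)
    (V W : Type) [AddCommGroup V] [Module k V] [FiniteDimensional k V]
    [AddCommGroup W] [Module k W] [FiniteDimensional k W]
    (ρ : Representation k K V) (ρ' : Representation k K W)
    (hV : IsSimpleModule (MonoidAlgebra k K) ρ.asModule)
    (hW : IsSimpleModule (MonoidAlgebra k K) ρ'.asModule)
    (hf : ∃ f : V →ₗ[k] W, f ≠ 0 ∧ ∀ h ∈ H, ∀ v : V, f (ρ h v) = ρ' h (f v)) :
    ∃ χ : K →* kˣ, (∀ h ∈ H, χ h = 1) ∧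
      ∃ e : V ≃ₗ[k] W, ∀ (g : K) (v : V), e (ρ g v) = (χ g : k) • ρ' g (e v) :=
  twist_by_character_of_common_restriction_general k K H hcomm V W ρ ρ' hV hW hf
end

section
/- Let k be a field, G a group, and H a subgroup of G. Let (κ, X) be a nonzero finite-dimensional k-linear representation of G such that every k-linear endomorphism of X commuting with the action of H is a scalar multiple of the identity. Let (σ, Y) and (σ', Y') be finite-dimensional k-linear representations of G on which H acts trivially (H ⊆ ker σ and H ⊆ ker σ'). If the tensor product representations κ ⊗ σ and κ ⊗ σ' of G are isomorphic, then σ ≅ σ' as representations of G. -/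
/-
For `h ∈ H` the action of `h` on `X ⊗ Y` is `κ h ⊗ 1`. If `L : X ⊗ Y → X ⊗ Y'` commutes with
all these, then for each `y` and each functional `f` on `Y'`, the slice `x ↦ (1 ⊗ f) (L (x ⊗ y))`
is an `H`-endomorphism of `X`, hence a scalar. Pairing with a functional `μ` with `μ x₀ = 1`
shows that `L = 1 ⊗ F` for `F y = (μ ⊗ 1) (L (x₀ ⊗ y))`. Applied to the isomorphism and its
inverse this gives `F : Y ≃ Y'`; since `X ≠ 0` is faithfully flat, `M ↦ 1 ⊗ M` is injective, so
the `G`-equivariance of `1 ⊗ F` with respect to `κ ⊗ σ` and `κ ⊗ σ'` cancels to that of `F`.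
-/

open TensorProduct

namespace TensorProduct

variable {R M N : Type*} [CommRing R] [AddCommGroup M] [Module R M] [AddCommGroup N] [Module R N]

noncomputable def leftSlice (f : Module.Dual R M) : M ⊗[R] N →ₗ[R] N :=
  TensorProduct.lid R N ∘ₗ f.rTensor N

noncomputable def rightSlice (f : Module.Dual R N) : M ⊗[R] N →ₗ[R] M :=
  TensorProduct.rid R M ∘ₗ f.lTensor M

@[simp]
theorem leftSlice_tmul (f : Module.Dual R M) (m : M) (n : N) :
    leftSlice f (m ⊗ₜ n) = f m • n := by
  simp [leftSlice]

@[simp]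
theorem rightSlice_tmul (f : Module.Dual R N) (m : M) (n : N) :
    rightSlice f (m ⊗ₜ n) = f n • m := by
  simp [rightSlice]

theorem apply_leftSlice (f : Module.Dual R M) (g : Module.Dual R N) (t : M ⊗[R] N) :
    g (leftSlice f t) = f (rightSlice g t) := by
  induction t using TensorProduct.induction_on with
  | zero => simp
  | tmul m n => simp [mul_comm]
  | add t₁ t₂ h₁ h₂ => simp only [map_add, h₁, h₂]

theorem rightSlice_comp_rTensor (f : Module.Dual R N) (s : Module.End R M) :
    rightSlice f ∘ₗ s.rTensor N = s ∘ₗ rightSlice f :=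
  TensorProduct.ext' fun m n => by simp

theorem ext_of_forall_rightSlice_eq [Module.Free R N] {t₁ t₂ : M ⊗[R] N}
    (h : ∀ f : Module.Dual R N, rightSlice f t₁ = rightSlice f t₂) : t₁ = t₂ := by
  classical
  let b := Module.Free.chooseBasis R N
  have coord_eq : ∀ i, Finsupp.lapply i ∘ₗ (equivFinsuppOfBasisRight b).toLinearMap =
      rightSlice (M := M) (b.coord i) :=
    fun i => TensorProduct.ext' fun m n => by simp
  refine (equivFinsuppOfBasisRight b).injective (Finsupp.ext fun i => ?_)
  simpa only [← coord_eq, LinearMap.comp_apply, Finsupp.lapply_apply, LinearEquiv.coe_coe]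
    using h (b.coord i)

end TensorProduct

theorem Module.FaithfullyFlat.lTensor_injective {R : Type*} (M : Type*) {N N' : Type*}
    [CommRing R] [AddCommGroup M] [Module R M] [Module.FaithfullyFlat R M]
    [AddCommGroup N] [Module R N] [AddCommGroup N'] [Module R N'] :
    Function.Injective (LinearMap.lTensor M : (N →ₗ[R] N') → M ⊗[R] N →ₗ[R] M ⊗[R] N') :=
  fun f g h => by
    rw [← sub_eq_zero, zero_iff_lTensor_zero R M, LinearMap.lTensor_sub, h, sub_self]

section

variable {k X Y Y' : Type*} [Field k] [AddCommGroup X] [Module k X] [Nontrivial X]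
  [AddCommGroup Y] [Module k Y] [AddCommGroup Y'] [Module k Y']
  {ι : Type*} (ρ : ι → Module.End k X)

theorem exists_eq_lTensor_of_comp_rTensor
    (hρ : ∀ φ : Module.End k X, (∀ i, Commute φ (ρ i)) → ∃ c : k, φ = c • LinearMap.id)
    (L : X ⊗[k] Y →ₗ[k] X ⊗[k] Y') (hL : ∀ i, L ∘ₗ (ρ i).rTensor Y = (ρ i).rTensor Y' ∘ₗ L) :
    ∃ F : Y →ₗ[k] Y', L = F.lTensor X := by
  obtain ⟨x₀, hx₀⟩ := exists_ne (0 : X)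
  obtain ⟨μ, hμ⟩ := Module.Projective.exists_dual_eq_one k hx₀
  have slice_scalar : ∀ (f : Module.Dual k Y') (y : Y),
      ∃ c : k, ∀ x, rightSlice f (L (x ⊗ₜ y)) = c • x := by
    intro f y
    obtain ⟨c, hc⟩ := hρ (rightSlice f ∘ₗ L ∘ₗ (TensorProduct.mk k X Y).flip y) fun i => by
      refine LinearMap.ext fun x => ?_
      calc rightSlice f (L ((ρ i).rTensor Y (x ⊗ₜ y)))
          = rightSlice f ((ρ i).rTensor Y' (L (x ⊗ₜ y))) :=
            congrArg _ (LinearMap.congr_fun (hL i) _)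
        _ = ρ i (rightSlice f (L (x ⊗ₜ y))) :=
            LinearMap.congr_fun (rightSlice_comp_rTensor f (ρ i)) _
    exact ⟨c, fun x => LinearMap.congr_fun hc x⟩
  refine ⟨leftSlice μ ∘ₗ L ∘ₗ TensorProduct.mk k X Y x₀, TensorProduct.ext' fun x y => ?_⟩
  refine ext_of_forall_rightSlice_eq fun f => ?_
  obtain ⟨c, hc⟩ := slice_scalar f y
  simp [hc, apply_leftSlice, hμ]

theorem exists_linearEquiv_eq_lTensor_of_comp_rTensor
    (hρ : ∀ φ : Module.End k X, (∀ i, Commute φ (ρ i)) → ∃ c : k, φ = c • LinearMap.id)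
    (e : X ⊗[k] Y ≃ₗ[k] X ⊗[k] Y')
    (he : ∀ i, e.toLinearMap ∘ₗ (ρ i).rTensor Y = (ρ i).rTensor Y' ∘ₗ e) :
    ∃ F : Y ≃ₗ[k] Y', e.toLinearMap = F.toLinearMap.lTensor X := by
  have he_symm : ∀ i, e.symm.toLinearMap ∘ₗ (ρ i).rTensor Y' = (ρ i).rTensor Y ∘ₗ e.symm := by
    intro i
    refine LinearMap.ext fun t => e.injective ?_
    simpa using (LinearMap.congr_fun (he i) (e.symm t)).symm
  obtain ⟨F, hF⟩ := exists_eq_lTensor_of_comp_rTensor ρ hρ e.toLinearMap he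
  obtain ⟨F', hF'⟩ := exists_eq_lTensor_of_comp_rTensor ρ hρ e.symm.toLinearMap he_symm
  refine ⟨.ofLinearMap F F' (Module.FaithfullyFlat.lTensor_injective X ?_)
    (Module.FaithfullyFlat.lTensor_injective X ?_), hF⟩
  · rw [LinearMap.lTensor_comp, ← hF, ← hF', LinearEquiv.comp_symm, LinearMap.lTensor_id]
  · rw [LinearMap.lTensor_comp, ← hF, ← hF', LinearEquiv.symm_comp, LinearMap.lTensor_id]

end

namespace Representation

theorem tprod_apply_of_forall_apply_eq {k G X Y : Type*} [CommSemiring k] [Monoid G]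
    [AddCommMonoid X] [Module k X] [AddCommMonoid Y] [Module k Y]
    (κ : Representation k G X) (σ : Representation k G Y) {g : G}
    (hg : ∀ y, σ g y = y) : κ.tprod σ g = (κ g).rTensor Y := by
  rw [tprod_apply, (LinearMap.ext hg : σ g = LinearMap.id)]
  rfl

theorem comp_eq_of_lTensor_comp_tprod {k G X Y Y' : Type*} [CommRing k] [Group G]
    [AddCommGroup X] [Module k X] [Module.FaithfullyFlat k X]
    [AddCommGroup Y] [Module k Y] [AddCommGroup Y'] [Module k Y']
    (κ : Representation k G X) {σ : Representation k G Y} {σ' : Representation k G Y'}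
    {F : Y →ₗ[k] Y'} {g : G}
    (hF : F.lTensor X ∘ₗ κ.tprod σ g = κ.tprod σ' g ∘ₗ F.lTensor X) :
    F ∘ₗ σ g = σ' g ∘ₗ F := by
  refine Module.FaithfullyFlat.lTensor_injective X (TensorProduct.ext' fun x y => ?_)
  simpa [tprod_apply] using LinearMap.congr_fun hF (κ g⁻¹ x ⊗ₜ y)

end Representation

theorem tensor_cancellation_of_scalar_endomorphisms_general
    (k : Type) [Field k] (G : Type) [Group G] (H : Subgroup G)
    (X Y Y' : Type)
    [AddCommGroup X] [Module k X] [Nontrivial X]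
    [AddCommGroup Y] [Module k Y]
    [AddCommGroup Y'] [Module k Y']
    (κ : Representation k G X) (σ : Representation k G Y) (σ' : Representation k G Y')
    (hEnd : ∀ φ : X →ₗ[k] X,
      (∀ h ∈ H, ∀ x : X, φ (κ h x) = κ h (φ x)) → ∃ c : k, φ = c • LinearMap.id)
    (hσ : ∀ h ∈ H, ∀ y : Y, σ h y = y)
    (hσ' : ∀ h ∈ H, ∀ y : Y', σ' h y = y)
    (hiso : ∃ e : (X ⊗[k] Y) ≃ₗ[k] (X ⊗[k] Y'),
      ∀ (g : G) (t : X ⊗[k] Y), e ((κ.tprod σ) g t) = (κ.tprod σ') g (e t)) :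
    ∃ e : Y ≃ₗ[k] Y', ∀ (g : G) (y : Y), e (σ g y) = σ' g (e y) := by
  obtain ⟨e, he⟩ := hiso
  have he_comp : ∀ g, e.toLinearMap ∘ₗ κ.tprod σ g = κ.tprod σ' g ∘ₗ e :=
    fun g => LinearMap.ext (he g)
  obtain ⟨F, hF⟩ := exists_linearEquiv_eq_lTensor_of_comp_rTensor (fun h : H => κ h)
    (fun φ hφ => hEnd φ fun h hh x => LinearMap.congr_fun (hφ ⟨h, hh⟩).eq x) e
    fun ⟨h, hh⟩ => by
      simpa only [κ.tprod_apply_of_forall_apply_eq σ (hσ h hh),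
        κ.tprod_apply_of_forall_apply_eq σ' (hσ' h hh)] using he_comp h
  refine ⟨F, fun g => LinearMap.congr_fun (κ.comp_eq_of_lTensor_comp_tprod ?_)⟩
  rw [← hF]
  exact he_comp g

theorem tensor_cancellation_of_scalar_endomorphisms
    (k : Type) [Field k] (G : Type) [Group G] (H : Subgroup G)
    (X Y Y' : Type)
    [AddCommGroup X] [Module k X] [FiniteDimensional k X] [Nontrivial X]
    [AddCommGroup Y] [Module k Y] [FiniteDimensional k Y]
    [AddCommGroup Y'] [Module k Y'] [FiniteDimensional k Y']
    (κ : Representation k G X) (σ : Representation k G Y) (σ' : Representation k G Y')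
    (hEnd : ∀ φ : X →ₗ[k] X,
      (∀ h ∈ H, ∀ x : X, φ (κ h x) = κ h (φ x)) → ∃ c : k, φ = c • LinearMap.id)
    (hσ : ∀ h ∈ H, ∀ y : Y, σ h y = y)
    (hσ' : ∀ h ∈ H, ∀ y : Y', σ' h y = y)
    (hiso : ∃ e : (X ⊗[k] Y) ≃ₗ[k] (X ⊗[k] Y'),
      ∀ (g : G) (t : X ⊗[k] Y), e ((κ.tprod σ) g t) = (κ.tprod σ') g (e t)) :
    ∃ e : Y ≃ₗ[k] Y', ∀ (g : G) (y : Y), e (σ g y) = σ' g (e y) :=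
  tensor_cancellation_of_scalar_endomorphisms_general k G H X Y Y' κ σ σ' hEnd hσ hσ' hiso
end

section
/- Let k be a field, N a group, Z a central subgroup of N, N' a normal subgroup of N, and (τ, V) a simple k-linear representation of N such that Z acts on V by scalar operators and the subgroup Z·N'·ker(τ) has finite index in N, where ker(τ) = {g ∈ N : τ(g) = id_V}. Then V, viewed as a k[N']-module, is semisimple of finite length. -/
/-!
`N` acts on the lattice of `k[N']`-submodules of `V` by `W ↦ τ g (W)`; this is well defined
because `N'` is normal. Elements of `Z` (scalars), of `N'` and of `ker τ` fix every
`k[N']`-submodule, so the action factors through a finite quotient of `N`. A submodule fixed by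
all of `N` is a `k[N]`-submodule, hence `0` or `V`. Therefore the finitely many translates of a
cyclic submodule `k[N'] v ≠ 0` span `V`, so `V` is finitely generated over `k[N']` and has a
maximal submodule `W`; the finitely many translates of `W` intersect in `0`, so `V` embeds into
the finite product of the simple modules `V ⧸ τ g (W)`.
-/

theorem OrderIso.isCompactElement_apply {α β : Type*} [CompleteLattice α] [CompleteLattice β]
    (e : α ≃o β) {a : α} (ha : IsCompactElement a) : IsCompactElement (e a) := by
  rw [CompleteLattice.isCompactElement_iff_le_of_directed_sSup_le] at ha ⊢
  intro s hne hdir hle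
  have hdir' : DirectedOn (· ≤ ·) (e.symm '' s) :=
    directedOn_image.mpr (hdir.mono fun _ _ h => e.symm.monotone h)
  rw [← e.le_symm_apply, e.symm.map_sSup, ← sSup_image] at hle
  obtain ⟨_, ⟨b, hb, rfl⟩, hab⟩ := ha _ (hne.image _) hdir' hle
  exact ⟨b, hb, e.le_symm_apply.mp hab⟩

namespace MonoidHom

variable {G α : Type*} [Group G] [CompleteLattice α] (φ : G →* (α ≃o α))

theorem apply_iSup_orbit (g : G) (a : α) : φ g (⨆ h, φ h a) = ⨆ h, φ h a := by
  simp only [OrderIso.map_iSup, ← RelIso.mul_apply, ← map_mul]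
  exact (Equiv.mulLeft g).iSup_comp (g := (φ · a))

theorem apply_iInf_orbit (g : G) (a : α) : φ g (⨅ h, φ h a) = ⨅ h, φ h a := by
  simp only [OrderIso.map_iInf, ← RelIso.mul_apply, ← map_mul]
  exact (Equiv.mulLeft g).iInf_comp (g := (φ · a))

theorem finite_orbit [φ.ker.FiniteIndex] (a : α) : (Set.range (φ · a)).Finite := by
  have : Finite φ.range :=
    (QuotientGroup.quotientKerEquivRange φ).toEquiv.finite_iff.mp inferInstance
  refine (Set.finite_range fun e : φ.range => (e : α ≃o α) a).subset ?_
  rintro _ ⟨g, rfl⟩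
  exact ⟨⟨φ g, g, rfl⟩, rfl⟩

end MonoidHom

namespace Submodule

variable {R M : Type*} [Ring R] [AddCommGroup M] [Module R M]

theorem isSemisimpleModule_and_isFiniteLength_of_sInf_eq_bot {s : Set (Submodule R M)}
    (hs : s.Finite) (hcoatom : ∀ W ∈ s, IsCoatom W) (hbot : sInf s = ⊥) :
    IsSemisimpleModule R M ∧ IsFiniteLength R M := by
  have := hs.to_subtype
  have : ∀ W : s, IsSimpleModule R (M ⧸ (W : Submodule R M)) :=
    fun W => isSimpleModule_iff_isCoatom.mpr (hcoatom W W.2)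
  let Φ : M →ₗ[R] Π W : s, M ⧸ (W : Submodule R M) :=
    LinearMap.pi fun W => (W : Submodule R M).mkQ
  have hΦ : Function.Injective Φ := by
    rw [← LinearMap.ker_eq_bot, LinearMap.ker_pi]
    simpa only [ker_mkQ, sInf_eq_iInf'] using hbot
  refine ⟨.of_injective Φ hΦ, .of_injective ?_ hΦ⟩
  exact isFiniteLength_iff_isNoetherian_isArtinian.mpr ⟨inferInstance, inferInstance⟩

variable {G : Type*} [Group G] (φ : G →* (Submodule R M ≃o Submodule R M)) [φ.ker.FiniteIndex]

theorem isCompactElement_top_of_ker_finiteIndex [Nontrivial M]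
    (hfixed : ∀ P : Submodule R M, (∀ g, φ g P = P) → P = ⊥ ∨ P = ⊤) :
    IsCompactElement (⊤ : Submodule R M) := by
  obtain ⟨v, hv⟩ := exists_ne (0 : M)
  have hle : (R ∙ v) ≤ ⨆ g, φ g (R ∙ v) := by
    simpa using le_iSup (φ · (R ∙ v)) 1
  obtain hbot | htop := hfixed _ (φ.apply_iSup_orbit · (R ∙ v))
  · exact absurd (span_singleton_eq_bot.mp (le_bot_iff.mp (hbot ▸ hle))) hv
  rw [← htop, ← sSup_range, ← (φ.finite_orbit _).coe_toFinset, ← Finset.sup_id_eq_sSup]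
  refine CompleteLattice.isCompactElement_finsetSup _ ?_
  simp only [Set.Finite.mem_toFinset, Set.forall_mem_range, id]
  exact fun g => (φ g).isCompactElement_apply (singleton_span_isCompactElement v)

theorem isSemisimpleModule_and_isFiniteLength_of_ker_finiteIndex [Nontrivial M]
    (hfixed : ∀ P : Submodule R M, (∀ g, φ g P = P) → P = ⊥ ∨ P = ⊤) :
    IsSemisimpleModule R M ∧ IsFiniteLength R M := by
  have := CompleteLattice.coatomic_of_top_compact (isCompactElement_top_of_ker_finiteIndex φ hfixed)
  obtain ⟨W, hW⟩ := IsCoatomic.exists_coatom (Submodule R M)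
  refine isSemisimpleModule_and_isFiniteLength_of_sInf_eq_bot (φ.finite_orbit W) ?_ ?_
  · rintro _ ⟨g, rfl⟩
    exact (φ g).isCoatom_iff W |>.mpr hW
  · rw [sInf_range]
    refine (hfixed _ (φ.apply_iInf_orbit · W)).resolve_right fun htop => hW.1 ?_
    exact top_le_iff.mp (htop ▸ iInf_le_of_le 1 (by simp))

end Submodule

namespace Representation

section

variable {k G V : Type*} [CommSemiring k] [AddCommMonoid V] [Module k V]

theorem apply_mem_of_mem [Monoid G] (ρ : Representation k G V)
    (W : Submodule (MonoidAlgebra k G) ρ.asModule) (g : G) {v : ρ.asModule} (hv : v ∈ W) :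
    ρ g v ∈ W := by
  have := W.smul_mem (MonoidAlgebra.single g 1) hv
  rwa [single_smul, one_smul] at this

variable [Group G] (ρ : Representation k G V) (N : Subgroup G) [N.Normal]

/-- The image `ρ g (W)`, written as the preimage under `ρ g⁻¹`. -/
noncomputable def translate (g : G)
    (W : Submodule (MonoidAlgebra k N) (asModule (ρ.comp N.subtype))) :
    Submodule (MonoidAlgebra k N) (asModule (ρ.comp N.subtype)) where
  toAddSubmonoid := ((W.restrictScalars k).comap (ρ g⁻¹)).toAddSubmonoid
  smul_mem' a v hv := by
    refine asAlgebraHom_mem_of_forall_mem (ρ.comp N.subtype) _ (fun n v hv => ?_) v hv a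
    have hn : g⁻¹ * n * g ∈ N := by simpa using ‹N.Normal›.conj_mem n n.2 g⁻¹
    have hconj : ρ (g⁻¹ * n * g) (ρ g⁻¹ v) = ρ g⁻¹ (ρ n v) := by
      simp only [map_mul, Module.End.mul_apply, self_inv_apply]
    show ρ g⁻¹ (ρ n v) ∈ W
    rw [← hconj]
    exact apply_mem_of_mem (ρ.comp N.subtype) W ⟨_, hn⟩ hv

theorem translate_mul (g h : G) (W : Submodule (MonoidAlgebra k N) (asModule (ρ.comp N.subtype))) :
    translate ρ N (g * h) W = translate ρ N g (translate ρ N h W) := by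
  ext v
  show ρ (g * h)⁻¹ v ∈ W ↔ ρ h⁻¹ (ρ g⁻¹ v) ∈ W
  rw [mul_inv_rev, map_mul]
  rfl

theorem translate_one (W : Submodule (MonoidAlgebra k N) (asModule (ρ.comp N.subtype))) :
    translate ρ N 1 W = W := by
  ext v
  show ρ 1⁻¹ v ∈ W ↔ v ∈ W
  rw [inv_one, map_one]
  rfl

theorem translate_mono (g : G) : Monotone (translate ρ N g) :=
  fun _ _ hle _ hv => hle hv

noncomputable def translateHom :
    G →* Submodule (MonoidAlgebra k N) (asModule (ρ.comp N.subtype)) ≃o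
      Submodule (MonoidAlgebra k N) (asModule (ρ.comp N.subtype)) where
  toFun g := Equiv.toOrderIso
    { toFun := translate ρ N g
      invFun := translate ρ N g⁻¹
      left_inv W := by rw [← translate_mul, inv_mul_cancel, translate_one]
      right_inv W := by rw [← translate_mul, mul_inv_cancel, translate_one] }
    (translate_mono ρ N g) (translate_mono ρ N g⁻¹)
  map_one' := RelIso.ext (translate_one ρ N)
  map_mul' g h := RelIso.ext (translate_mul ρ N g h)

theorem le_ker_translateHom {S : Subgroup G}
    (hS : ∀ s ∈ S, ∀ W : Submodule (MonoidAlgebra k N) (asModule (ρ.comp N.subtype)),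
      ∀ w ∈ W, ρ s w ∈ W) :
    S ≤ (translateHom ρ N).ker := by
  intro s hs
  refine RelIso.ext fun W => le_antisymm (fun v hv => ?_) (hS _ (S.inv_mem hs) W)
  have h := hS s hs W _ hv
  rwa [ρ.self_inv_apply s v] at h

theorem self_le_ker_translateHom : N ≤ (translateHom ρ N).ker :=
  le_ker_translateHom ρ N fun n hn W _ hw => apply_mem_of_mem (ρ.comp N.subtype) W ⟨n, hn⟩ hw

theorem ker_le_ker_translateHom : ρ.ker ≤ (translateHom ρ N).ker :=
  le_ker_translateHom ρ N fun _ hg _ _ hw => by rwa [MonoidHom.mem_ker.mp hg]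

theorem le_ker_translateHom_of_forall_eq_smul {S : Subgroup G}
    (hS : ∀ s ∈ S, ∃ c : k, ρ s = c • LinearMap.id) : S ≤ (translateHom ρ N).ker :=
  le_ker_translateHom ρ N fun s hs W _ hw => by
    obtain ⟨c, hc⟩ := hS s hs
    rw [hc]
    exact W.smul_of_tower_mem c hw

end

section

variable {k G V : Type*} [CommRing k] [AddCommGroup V] [Module k V] [Group G]
  (ρ : Representation k G V) (N : Subgroup G) [N.Normal]

theorem eq_bot_or_eq_top_of_forall_translateHom_eq
    [IsSimpleModule (MonoidAlgebra k G) ρ.asModule]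
    (P : Submodule (MonoidAlgebra k N) (asModule (ρ.comp N.subtype)))
    (hP : ∀ g, translateHom ρ N g P = P) : P = ⊥ ∨ P = ⊤ := by
  have hstable : ∀ g, ∀ v ∈ P.restrictScalars k, ρ g v ∈ P.restrictScalars k := by
    intro g v hv
    rw [← hP g]
    show ρ g⁻¹ (ρ g v) ∈ P
    rwa [ρ.inv_self_apply g v]
  let Q : Submodule (MonoidAlgebra k G) ρ.asModule :=
    { toAddSubmonoid := P.toAddSubmonoid
      smul_mem' a v hv := asAlgebraHom_mem_of_forall_mem ρ _ hstable v hv a }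
  refine (eq_bot_or_eq_top Q).imp (fun h => ?_) (fun h => ?_) <;> ext v
  · exact SetLike.ext_iff.mp h v
  · exact SetLike.ext_iff.mp h v

end

end Representation

open Representation Submodule in
theorem restriction_semisimple_finite_length_of_central_character_general
    (k : Type) [Field k] (N : Type) [Group N]
    (Z : Subgroup N)
    (N' : Subgroup N) [N'.Normal]
    (V : Type) [AddCommGroup V] [Module k V]
    (τ : Representation k N V)
    (hsimple : IsSimpleModule (MonoidAlgebra k N) τ.asModule)
    (hZscalar : ∀ z : N, z ∈ Z → ∃ c : k, τ z = c • LinearMap.id)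
    (hindex : (Z ⊔ N' ⊔ MonoidHom.ker τ).FiniteIndex) :
    IsSemisimpleModule (MonoidAlgebra k N') (Representation.asModule (τ.comp N'.subtype)) ∧
      IsFiniteLength (MonoidAlgebra k N') (Representation.asModule (τ.comp N'.subtype)) := by
  have hker : Z ⊔ N' ⊔ MonoidHom.ker τ ≤ (translateHom τ N').ker :=
    sup_le (sup_le (le_ker_translateHom_of_forall_eq_smul τ N' hZscalar)
      (self_le_ker_translateHom τ N')) (ker_le_ker_translateHom τ N')
  have := Subgroup.finiteIndex_of_le hker
  have : Nontrivial (asModule (τ.comp N'.subtype)) :=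
    IsSimpleModule.nontrivial (MonoidAlgebra k N) τ.asModule
  exact isSemisimpleModule_and_isFiniteLength_of_ker_finiteIndex (translateHom τ N')
    (eq_bot_or_eq_top_of_forall_translateHom_eq τ N')

theorem restriction_semisimple_finite_length_of_central_character
    (k : Type) [Field k] (N : Type) [Group N]
    (Z : Subgroup N) (hZ : Z ≤ Subgroup.center N)
    (N' : Subgroup N) [N'.Normal]
    (V : Type) [AddCommGroup V] [Module k V]
    (τ : Representation k N V)
    (hsimple : IsSimpleModule (MonoidAlgebra k N) τ.asModule)
    (hZscalar : ∀ z : N, z ∈ Z → ∃ c : k, τ z = c • LinearMap.id)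
    (hindex : (Z ⊔ N' ⊔ MonoidHom.ker τ).FiniteIndex) :
    IsSemisimpleModule (MonoidAlgebra k N') (Representation.asModule (τ.comp N'.subtype)) ∧
      IsFiniteLength (MonoidAlgebra k N') (Representation.asModule (τ.comp N'.subtype)) :=
  restriction_semisimple_finite_length_of_central_character_general k N Z N' V τ hsimple hZscalar
    hindex
end
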